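/- arXiv:2304.09400 — 3 statements merged into one kernel-verified Lean document; each statement's English description precedes it below -/
import Mathlib

section
/- Let σ > 0 and c ≥ 0. Let Θ be uniformly distributed on [−π, π), let Z ~ CN(0, σ²), and assume Θ and Z are independent. Then the complex random variable W = c·e^{iΘ} + Z has a density with respect to Lebesgue measure on ℂ ≅ ℝ², given by p(w) = (1/(πσ²)) · exp(−(|w|² + c²)/σ²) · I₀(2|w|c/σ²). -/
/-!
The two independent `N(0, σ²/2)` coordinates of `Z` multiply to the density
`g(z) = (πσ²)⁻¹ e^{-|z|²/σ²}` on `ℂ`. Since `Θ` and `Z` are independent, the law of `W` is the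
convolution of the law of `c e^{iΘ}` with `g`, i.e. it has the density `w ↦ 𝔼 g(w - c e^{iΘ})`.
Expanding `|w - c e^{iθ}|² = |w|² + c² - 2c|w| cos(θ - arg w)` and removing the phase `arg w` by
`2π`-periodicity turns this average into the integral defining `I₀`.
-/

open MeasureTheory ProbabilityTheory Real ENNReal

/-- The modified Bessel function of the first kind of order zero:
`I₀(x) = (1/(2π)) ∫_{−π}^{π} e^{x cos θ} dθ`. -/
noncomputable def I0 (x : ℝ) : ℝ := (1 / (2 * π)) * ∫ θ in (-π)..π, Real.exp (x * Real.cos θ)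

open scoped NNReal

noncomputable def circularGaussianPDF (σ : ℝ) (z : ℂ) : ℝ :=
  1 / (π * σ ^ 2) * Real.exp (-‖z‖ ^ 2 / σ ^ 2)

lemma continuous_circularGaussianPDF (σ : ℝ) : Continuous (circularGaussianPDF σ) := by
  unfold circularGaussianPDF
  fun_prop

lemma circularGaussianPDF_nonneg (σ : ℝ) (z : ℂ) : 0 ≤ circularGaussianPDF σ z := by
  unfold circularGaussianPDF
  positivity

lemma gaussianPDFReal_mul_gaussianPDFReal (v : ℝ≥0) (x y : ℝ) :
    gaussianPDFReal 0 v x * gaussianPDFReal 0 v y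
      = (π * (2 * v))⁻¹ * Real.exp (-(x ^ 2 + y ^ 2) / (2 * v)) := by
  rw [gaussianPDFReal, gaussianPDFReal, mul_mul_mul_comm, ← mul_inv,
    Real.mul_self_sqrt (by positivity), ← Real.exp_add]
  congr 2 <;> ring

lemma gaussianPDF_mul_gaussianPDF_eq_circularGaussianPDF (σ x y : ℝ) :
    gaussianPDF 0 (σ ^ 2 / 2).toNNReal x * gaussianPDF 0 (σ ^ 2 / 2).toNNReal y
      = ENNReal.ofReal (circularGaussianPDF σ ⟨x, y⟩) := by
  rw [gaussianPDF, gaussianPDF, ← ENNReal.ofReal_mul (gaussianPDFReal_nonneg _ _ _),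
    gaussianPDFReal_mul_gaussianPDFReal, Real.coe_toNNReal _ (by positivity),
    mul_div_cancel₀ _ two_ne_zero, circularGaussianPDF, Complex.sq_norm, Complex.normSq_mk,
    one_div, ← sq, ← sq]

lemma MeasurableEquiv.map_withDensity_comp {α β : Type*} [MeasurableSpace α] [MeasurableSpace β]
    (e : α ≃ᵐ β) {μ : Measure α} {ν : Measure β} (he : MeasurePreserving e μ ν)
    {g : β → ℝ≥0∞} (hg : Measurable g) :
    (μ.withDensity (g ∘ e)).map e = ν.withDensity g := by
  ext s hs
  rw [Measure.map_apply e.measurable hs, withDensity_apply _ (e.measurable hs),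
    withDensity_apply _ hs]
  exact he.setLIntegral_comp_preimage hs hg

lemma map_eq_withDensity_circularGaussianPDF {Ω : Type*} [MeasurableSpace Ω] {μ : Measure Ω}
    [IsFiniteMeasure μ] {σ : ℝ} (hσ : σ ≠ 0) {Z : Ω → ℂ} (hZ : Measurable Z)
    (hre : μ.map (fun ω => (Z ω).re) = gaussianReal 0 (σ ^ 2 / 2).toNNReal)
    (him : μ.map (fun ω => (Z ω).im) = gaussianReal 0 (σ ^ 2 / 2).toNNReal)
    (hind : IndepFun (fun ω => (Z ω).re) (fun ω => (Z ω).im) μ) :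
    μ.map Z = volume.withDensity (fun z => ENNReal.ofReal (circularGaussianPDF σ z)) := by
  have hv : (σ ^ 2 / 2).toNNReal ≠ 0 := by
    simp only [ne_eq, Real.toNNReal_eq_zero, not_le]
    positivity
  have hreim : μ.map (fun ω => ((Z ω).re, (Z ω).im)) = volume.withDensity
      ((fun z => ENNReal.ofReal (circularGaussianPDF σ z)) ∘
        Complex.measurableEquivRealProd.symm) := by
    rw [hind.map_prod_eq_prod_map_map (by fun_prop) (by fun_prop), hre, him,
      gaussianReal_of_var_ne_zero _ hv,
      prod_withDensity (measurable_gaussianPDF _ _) (measurable_gaussianPDF _ _),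
      ← Measure.volume_eq_prod]
    congr with p
    exact gaussianPDF_mul_gaussianPDF_eq_circularGaussianPDF σ p.1 p.2
  calc μ.map Z
      = (μ.map (fun ω => ((Z ω).re, (Z ω).im))).map Complex.measurableEquivRealProd.symm := by
        rw [Measure.map_map (by fun_prop) (by fun_prop)]
        rfl
    _ = _ := by
        rw [hreim]
        exact Complex.measurableEquivRealProd.symm.map_withDensity_comp
          Complex.volume_preserving_equiv_real_prod.symm
          (continuous_circularGaussianPDF σ).measurable.ennreal_ofReal

section Convolution

variable {α G : Type*} [MeasurableSpace α] [AddCommGroup G] [MeasurableSpace G] [MeasurableAdd₂ G]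
  [MeasurableNeg G] {ρ : Measure G} [SFinite ρ] [ρ.IsAddLeftInvariant]
  {f : α → G} {g : G → ℝ≥0∞}

lemma map_add_prod_withDensity {ν : Measure α} [SFinite ν] (hf : Measurable f) (hg : Measurable g) :
    (ν.prod (ρ.withDensity g)).map (fun p => f p.1 + p.2)
      = ρ.withDensity (fun w => ∫⁻ a, g (w - f a) ∂ν) := by
  have hF : Measurable fun p : α × G => f p.1 + p.2 := by fun_prop
  have hsection : ∀ a (s : Set G), MeasurableSet s →
      ρ.withDensity g ((f a + ·) ⁻¹' s) = ∫⁻ w in s, g (w - f a) ∂ρ := fun a s hs => by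
    rw [withDensity_apply _ (measurable_const_add (f a) hs)]
    simpa using (measurePreserving_add_left ρ (f a)).setLIntegral_comp_preimage hs
      (hg.comp (measurable_id.sub_const (f a)))
  ext s hs
  rw [Measure.map_apply hF hs, Measure.prod_apply (hF hs), withDensity_apply _ hs]
  exact (lintegral_congr fun a => hsection a s hs).trans (lintegral_lintegral_swap (by fun_prop))

lemma ProbabilityTheory.IndepFun.map_add_eq_withDensity {Ω : Type*} [MeasurableSpace Ω]
    {μ : Measure Ω} [IsFiniteMeasure μ] {X : Ω → α} {Z : Ω → G} (hXZ : IndepFun X Z μ)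
    (hX : Measurable X) (hZ : Measurable Z) (hf : Measurable f) (hg : Measurable g)
    (hZg : μ.map Z = ρ.withDensity g) :
    μ.map (fun ω => f (X ω) + Z ω) = ρ.withDensity (fun w => ∫⁻ x, g (w - f x) ∂(μ.map X)) := by
  rw [← map_add_prod_withDensity hf hg, ← hZg,
    ← hXZ.map_prod_eq_prod_map_map hX.aemeasurable hZ.aemeasurable,
    Measure.map_map (by fun_prop) (hX.prodMk hZ)]
  rfl

end Convolution

lemma norm_sub_ofReal_mul_exp_sq (w : ℂ) (c θ : ℝ) :
    ‖w - c * Complex.exp (θ * Complex.I)‖ ^ 2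
      = ‖w‖ ^ 2 + c ^ 2 - 2 * c * ‖w‖ * Real.cos (θ - w.arg) := by
  have hcos := Complex.norm_mul_cos_arg w
  have hsin := Complex.norm_mul_sin_arg w
  rw [Real.cos_sub, Complex.sq_norm, Complex.sq_norm, Complex.normSq_apply, Complex.normSq_apply]
  simp only [Complex.sub_re, Complex.sub_im, Complex.mul_re, Complex.mul_im,
    Complex.ofReal_re, Complex.ofReal_im, Complex.exp_ofReal_mul_I_re,
    Complex.exp_ofReal_mul_I_im]
  linear_combination c ^ 2 * Real.sin_sq_add_cos_sq θ + (2 * c * Real.cos θ) * hcos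
    + (2 * c * Real.sin θ) * hsin

lemma circularGaussianPDF_sub_ofReal_mul_exp (σ c θ : ℝ) (w : ℂ) :
    circularGaussianPDF σ (w - c * Complex.exp (θ * Complex.I))
      = 1 / (π * σ ^ 2) * Real.exp (-(‖w‖ ^ 2 + c ^ 2) / σ ^ 2)
        * Real.exp (2 * ‖w‖ * c / σ ^ 2 * Real.cos (θ - w.arg)) := by
  rw [circularGaussianPDF, norm_sub_ofReal_mul_exp_sq, mul_assoc (1 / (π * σ ^ 2)), ← Real.exp_add]
  congr 2
  ring

lemma Function.Periodic.intervalIntegral_comp_sub_eq {f : ℝ → ℝ} {T : ℝ} (hf : Periodic f T)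
    (a φ : ℝ) : ∫ x in a..a + T, f (x - φ) = ∫ x in a..a + T, f x := by
  rw [intervalIntegral.integral_comp_sub_right, show a + T - φ = a - φ + T by ring]
  exact hf.intervalIntegral_add_eq (a - φ) a

lemma I0_eq_integral_exp_mul_cos_sub (B φ : ℝ) :
    I0 B = 1 / (2 * π) * ∫ θ in (-π)..π, Real.exp (B * Real.cos (θ - φ)) := by
  have hper : Function.Periodic (fun θ => Real.exp (B * Real.cos θ)) (2 * π) := fun θ => by
    simp only [Real.cos_add_two_pi]
  have hshift := hper.intervalIntegral_comp_sub_eq (-π) φ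
  rw [show -π + 2 * π = π by ring] at hshift
  rw [I0, hshift]

lemma lintegral_ofReal_smul_restrict_Ico {f : ℝ → ℝ} (hf : Continuous f) (hf0 : ∀ x, 0 ≤ f x)
    {a b : ℝ} (hab : a < b) :
    ∫⁻ x, ENNReal.ofReal (f x) ∂((ENNReal.ofReal (b - a))⁻¹ • volume.restrict (Set.Ico a b))
      = ENNReal.ofReal ((b - a)⁻¹ * ∫ x in a..b, f x) := by
  rw [lintegral_smul_measure, ← ofReal_integral_eq_lintegral_ofReal
      (hf.integrableOn_Icc.mono_set Set.Ico_subset_Icc_self) (ae_of_all _ fun x => hf0 x),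
    integral_Ico_eq_integral_Ioo, ← integral_Ioc_eq_integral_Ioo,
    ← intervalIntegral.integral_of_le hab.le, ← ENNReal.ofReal_inv_of_pos (sub_pos.2 hab),
    smul_eq_mul, ← ENNReal.ofReal_mul (inv_nonneg.2 (sub_pos.2 hab).le)]

lemma lintegral_circularGaussianPDF_sub_uniform (σ c : ℝ) (w : ℂ) :
    ∫⁻ θ, ENNReal.ofReal (circularGaussianPDF σ (w - c * Complex.exp (θ * Complex.I)))
        ∂((ENNReal.ofReal (2 * π))⁻¹ • volume.restrict (Set.Ico (-π) π))
      = ENNReal.ofReal (1 / (π * σ ^ 2) * Real.exp (-(‖w‖ ^ 2 + c ^ 2) / σ ^ 2)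
          * I0 (2 * ‖w‖ * c / σ ^ 2)) := by
  have h2π : 2 * π = π - -π := by ring
  rw [h2π, lintegral_ofReal_smul_restrict_Ico
      (f := fun θ : ℝ => circularGaussianPDF σ (w - c * Complex.exp (θ * Complex.I)))
      ((continuous_circularGaussianPDF σ).comp (by fun_prop))
      (fun θ => circularGaussianPDF_nonneg _ _) (by linarith [pi_pos]), ← h2π]
  simp only [circularGaussianPDF_sub_ofReal_mul_exp,
    intervalIntegral.integral_const_mul, I0_eq_integral_exp_mul_cos_sub _ w.arg]
  congr 1
  ring

theorem stmt2_general {Ω : Type*} [MeasurableSpace Ω] (μ : Measure Ω) [IsProbabilityMeasure μ]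
    (σ c : ℝ) (hσ : 0 < σ)
    (Θ : Ω → ℝ) (Z : Ω → ℂ) (hΘm : Measurable Θ) (hZm : Measurable Z)
    (hΘ : μ.map Θ = (ENNReal.ofReal (2 * π))⁻¹ • volume.restrict (Set.Ico (-π) π))
    (hZre : μ.map (fun ω => (Z ω).re) = gaussianReal 0 (Real.toNNReal (σ ^ 2 / 2)))
    (hZim : μ.map (fun ω => (Z ω).im) = gaussianReal 0 (Real.toNNReal (σ ^ 2 / 2)))
    (hZind : IndepFun (fun ω => (Z ω).re) (fun ω => (Z ω).im) μ)
    (hind : IndepFun Θ Z μ) :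
    μ.map (fun ω => (c : ℂ) * Complex.exp ((Θ ω : ℂ) * Complex.I) + Z ω)
      = volume.withDensity (fun w => ENNReal.ofReal
          ((1 / (π * σ ^ 2)) * Real.exp (-(‖w‖ ^ 2 + c ^ 2) / σ ^ 2)
            * I0 (2 * ‖w‖ * c / σ ^ 2))) := by
  have hlawZ := map_eq_withDensity_circularGaussianPDF hσ.ne' hZm hZre hZim hZind
  refine (hind.map_add_eq_withDensity (f := fun θ : ℝ => (c : ℂ) * Complex.exp (θ * Complex.I))
    hΘm hZm (by fun_prop) (continuous_circularGaussianPDF σ).measurable.ennreal_ofReal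
    hlawZ).trans ?_
  simp only [hΘ, lintegral_circularGaussianPDF_sub_uniform]

/-- If `Θ` is uniform on `[−π, π)`, `Z ~ CN(0, σ²)` (i.e. its real and imaginary parts are
independent `N(0, σ²/2)` Gaussians), and `Θ` and `Z` are independent, then
`W = c·e^{iΘ} + Z` has density `w ↦ (1/(πσ²))·exp(−(|w|²+c²)/σ²)·I₀(2|w|c/σ²)` with respect
to Lebesgue measure on `ℂ`. -/
theorem stmt2 {Ω : Type*} [MeasurableSpace Ω] (μ : Measure Ω) [IsProbabilityMeasure μ]
    (σ c : ℝ) (hσ : 0 < σ) (hc : 0 ≤ c)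
    (Θ : Ω → ℝ) (Z : Ω → ℂ) (hΘm : Measurable Θ) (hZm : Measurable Z)
    (hΘ : μ.map Θ = (ENNReal.ofReal (2 * π))⁻¹ • volume.restrict (Set.Ico (-π) π))
    (hZre : μ.map (fun ω => (Z ω).re) = gaussianReal 0 (Real.toNNReal (σ ^ 2 / 2)))
    (hZim : μ.map (fun ω => (Z ω).im) = gaussianReal 0 (Real.toNNReal (σ ^ 2 / 2)))
    (hZind : IndepFun (fun ω => (Z ω).re) (fun ω => (Z ω).im) μ)
    (hind : IndepFun Θ Z μ) :
    μ.map (fun ω => (c : ℂ) * Complex.exp ((Θ ω : ℂ) * Complex.I) + Z ω)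
      = volume.withDensity (fun w => ENNReal.ofReal
          ((1 / (π * σ ^ 2)) * Real.exp (-(‖w‖ ^ 2 + c ^ 2) / σ ^ 2)
            * I0 (2 * ‖w‖ * c / σ ^ 2))) :=
  stmt2_general μ σ c hσ Θ Z hΘm hZm hΘ hZre hZim hZind hind
end

section
/- Let P > 0, let N be a positive integer and α = π/N. Let A be a real random variable with density a ↦ (2a/P)·e^{−a²/P} on (0, ∞) (Rayleigh with E[A²] = P), let Θ₁ be uniform on [−α, α), let Θ₂ be uniform on the finite set {2nα : n = 0, 1, …, N−1}, and assume A, Θ₁, Θ₂ are mutually independent. Then the complex random variable X = A·e^{i(Θ₁+Θ₂)} is circularly symmetric Gaussian CN(0, P), i.e., X has density z ↦ (1/(πP))·e^{−|z|²/P} with respect to Lebesgue measure on ℂ. -/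
open MeasureTheory ProbabilityTheory Real ENNReal

/-!
Independence makes the law of `Θ₁ + Θ₂` the convolution of the two laws; the `N` translates of
the window `[-α, α)` by the grid `2nα` tile `[-α, 2π - α)`, so `Θ₁ + Θ₂` is uniform on an interval
of length `2π`. Since `θ ↦ e^{iθ}` is `2π`-periodic, the law of `A e^{iΘ}` does not depend on which
period interval carries the uniform angle, so we may take `(-π, π)`. On `(0, ∞) × (-π, π)` the
Rayleigh-times-uniform density `(2r/P) e^{-r²/P} / (2π)` is `r` times the Gaussian density at
`r e^{iθ}`, and the factor `r` is exactly the Jacobian of polar coordinates.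
-/

open Set Measure

theorem Function.Periodic.setLIntegral_Ioc_add_eq {g : ℝ → ℝ≥0∞} {T : ℝ}
    (hg : Function.Periodic g T) (hT : 0 < T) (s t : ℝ) :
    ∫⁻ x in Ioc s (s + T), g x = ∫⁻ x in Ioc t (t + T), g x := by
  have : Fact (0 < T) := ⟨hT⟩
  simp only [← hg.lift_coe]
  exact (AddCircle.lintegral_preimage T s hg.lift).trans
    (AddCircle.lintegral_preimage T t hg.lift).symm

theorem Measure.map_prod_restrict_Ioc_add_eq_of_periodic {α β : Type*} [MeasurableSpace α]
    [MeasurableSpace β] {f : α × ℝ → β} (hf : Measurable f) {T : ℝ} (hT : 0 < T)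
    (hper : ∀ a θ, f (a, θ + T) = f (a, θ)) (ν : Measure α) [SFinite ν] (s t : ℝ) :
    (ν.prod (volume.restrict (Ioc s (s + T)))).map f
      = (ν.prod (volume.restrict (Ioc t (t + T)))).map f := by
  ext S hS
  have hpre := hf hS
  rw [map_apply hf hS, map_apply hf hS, Measure.prod_apply hpre, Measure.prod_apply hpre]
  refine lintegral_congr fun a => ?_
  have hslice : MeasurableSet (Prod.mk a ⁻¹' (f ⁻¹' S)) := measurable_prodMk_left hpre
  rw [← lintegral_indicator_one hslice, ← lintegral_indicator_one hslice]
  have hg : Function.Periodic (fun θ => S.indicator (1 : β → ℝ≥0∞) (f (a, θ))) T :=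
    fun θ => by simp only [hper]
  exact hg.setLIntegral_Ioc_add_eq hT s t

theorem Complex.measurable_polarCoord_symm : Measurable Complex.polarCoord.symm :=
  Complex.measurableEquivRealProd.symm.measurable.comp continuous_polarCoord_symm.measurable

theorem Complex.map_polarCoord_symm_withDensity (f : ℂ → ℝ≥0∞) :
    ((volume.restrict polarCoord.target).withDensity
        fun p => ENNReal.ofReal p.1 * f (Complex.polarCoord.symm p)).map Complex.polarCoord.symm
      = volume.withDensity f := by
  ext s hs
  rw [map_apply Complex.measurable_polarCoord_symm hs,
    withDensity_apply _ (Complex.measurable_polarCoord_symm hs), withDensity_apply _ hs,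
    ← lintegral_indicator hs, ← Complex.lintegral_comp_polarCoord_symm,
    ← lintegral_indicator (Complex.measurable_polarCoord_symm hs)]
  refine lintegral_congr fun p => ?_
  by_cases hp : Complex.polarCoord.symm p ∈ s
  · rw [indicator_of_mem (mem_preimage.2 hp), indicator_of_mem hp, smul_eq_mul]
  · rw [indicator_of_notMem (mt mem_preimage.1 hp), indicator_of_notMem hp, smul_zero]

theorem Real.map_volume_restrict_Ico_add_right (a b x : ℝ) :
    (volume.restrict (Ico a b)).map (· + x) = volume.restrict (Ico (a + x) (b + x)) := by
  have h := (measurePreserving_add_right volume x).restrict_preimage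
    (measurableSet_Ico (a := a + x) (b := b + x))
  rw [preimage_add_const_Ico, add_sub_cancel_right, add_sub_cancel_right] at h
  exact h.map_eq

theorem Real.sum_map_volume_restrict_Ico_add_mul {b : ℝ} (hb : 0 ≤ b) (a : ℝ) (N : ℕ) :
    ∑ n ∈ Finset.range N, (volume.restrict (Ico a (a + b))).map (· + n * b)
      = volume.restrict (Ico a (a + N * b)) := by
  induction N with
  | zero => simp
  | succ N ih =>
    rw [Finset.sum_range_succ, ih, Real.map_volume_restrict_Ico_add_right,
      ← restrict_union Ico_disjoint_Ico_same measurableSet_Ico,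
      Ico_union_Ico_eq_Ico (by nlinarith [N.cast_nonneg (α := ℝ)]) (by linarith)]
    congr 2
    push_cast
    ring

theorem Measure.conv_finset_sum {M ι : Type*} [AddMonoid M] [MeasurableSpace M]
    [MeasurableAdd₂ M] (μ : Measure M) [SFinite μ] (s : Finset ι) (ν : ι → Measure M)
    [∀ i, IsFiniteMeasure (ν i)] : μ ∗ ∑ i ∈ s, ν i = ∑ i ∈ s, μ ∗ ν i := by
  classical
  induction s using Finset.induction_on with
  | empty => simp
  | insert i s hi ih => rw [Finset.sum_insert hi, conv_add, ih, Finset.sum_insert hi]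

theorem Real.volume_restrict_Ico_conv_sum_dirac {b : ℝ} (hb : 0 ≤ b) (a : ℝ) (N : ℕ) :
    volume.restrict (Ico a (a + b)) ∗ ∑ n ∈ Finset.range N, dirac ((n : ℝ) * b)
      = volume.restrict (Ico a (a + N * b)) := by
  simp only [conv_finset_sum, conv_dirac, Real.sum_map_volume_restrict_Ico_add_mul hb]

theorem Real.smul_restrict_Ico_conv_sum_smul_dirac {a : ℝ} (ha : 0 ≤ a) (N : ℕ) :
    ((ENNReal.ofReal (2 * a))⁻¹ • volume.restrict (Ico (-a) a))
        ∗ ∑ n ∈ Finset.range N, ((N : ℝ≥0∞))⁻¹ • dirac (2 * n * a)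
      = (ENNReal.ofReal (2 * N * a))⁻¹ • volume.restrict (Ico (-a) (-a + 2 * N * a)) := by
  have hgrid : ∀ n : ℕ, 2 * (n : ℝ) * a = n * (2 * a) := fun n => by ring
  have hscale : (ENNReal.ofReal (2 * a))⁻¹ * (N : ℝ≥0∞)⁻¹ = (ENNReal.ofReal (2 * N * a))⁻¹ := by
    rw [← ENNReal.ofReal_natCast N, ← ENNReal.mul_inv (Or.inr ofReal_ne_top) (Or.inl ofReal_ne_top),
      ← ENNReal.ofReal_mul (by positivity)]
    ring_nf
  have hconv := Real.volume_restrict_Ico_conv_sum_dirac (b := 2 * a) (by positivity) (-a) N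
  rw [show -a + 2 * a = a by ring] at hconv
  rw [← Finset.smul_sum, conv_smul_left, conv_smul_right, smul_smul, hscale]
  simp_rw [hgrid]
  rw [hconv]

theorem Complex.map_polarCoord_symm_prod_restrict_Ico (ν : Measure ℝ) [SFinite ν] (t : ℝ) :
    (ν.prod (volume.restrict (Ico t (t + 2 * π)))).map Complex.polarCoord.symm
      = (ν.prod (volume.restrict (Ioo (-π) π))).map Complex.polarCoord.symm := by
  have hper : ∀ r θ, Complex.polarCoord.symm (r, θ + 2 * π) = Complex.polarCoord.symm (r, θ) :=
    fun r θ => by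
      simp only [Complex.polarCoord_symm_apply, Real.cos_add_two_pi, Real.sin_add_two_pi]
  have h := Measure.map_prod_restrict_Ioc_add_eq_of_periodic Complex.measurable_polarCoord_symm
    two_pi_pos hper ν t (-π)
  rwa [show -π + 2 * π = π by ring, ← restrict_congr_set Ico_ae_eq_Ioc,
    ← restrict_congr_set Ioo_ae_eq_Ioc] at h

noncomputable def rayleighMeasure (P : ℝ) : Measure ℝ :=
  (volume.restrict (Ioi 0)).withDensity
    fun a => ENNReal.ofReal ((2 * a / P) * Real.exp (-a ^ 2 / P))

instance (P : ℝ) : SFinite (rayleighMeasure P) := by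
  unfold rayleighMeasure
  infer_instance

noncomputable def complexGaussianMeasure (P : ℝ) : Measure ℂ :=
  volume.withDensity fun z => ENNReal.ofReal ((1 / (π * P)) * Real.exp (-‖z‖ ^ 2 / P))

theorem Complex.map_polarCoord_symm_rayleigh_prod_uniform {P : ℝ} (hP : 0 < P) :
    ((rayleighMeasure P).prod ((ENNReal.ofReal (2 * π))⁻¹ • volume.restrict (Ioo (-π) π))).map
      Complex.polarCoord.symm = complexGaussianMeasure P := by
  rw [rayleighMeasure, complexGaussianMeasure, ← Complex.map_polarCoord_symm_withDensity]
  congr 1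
  rw [prod_withDensity_left (by fun_prop), prod_smul_right, prod_restrict, ← volume_eq_prod,
    withDensity_smul_measure, ← withDensity_smul' _ _ (by simp [pi_pos])]
  refine withDensity_congr_ae ?_
  filter_upwards [ae_restrict_mem (measurableSet_Ioi.prod measurableSet_Ioo)] with p hp
  have hr : 0 < p.1 := hp.1
  rw [Complex.norm_polarCoord_symm, abs_of_pos hr, Pi.smul_apply, smul_eq_mul,
    ← ofReal_inv_of_pos (by positivity), ← ENNReal.ofReal_mul (by positivity),
    ← ENNReal.ofReal_mul hr.le]
  congr 1
  field_simp

theorem Complex.map_polarCoord_symm_rayleigh_prod_uniform_Ico {P : ℝ} (hP : 0 < P) (t : ℝ) :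
    ((rayleighMeasure P).prod
        ((ENNReal.ofReal (2 * π))⁻¹ • volume.restrict (Ico t (t + 2 * π)))).map
      Complex.polarCoord.symm = complexGaussianMeasure P := by
  rw [prod_smul_right, Measure.map_smul, Complex.map_polarCoord_symm_prod_restrict_Ico,
    ← Measure.map_smul, ← prod_smul_right, Complex.map_polarCoord_symm_rayleigh_prod_uniform hP]

/-- Sum-rate optimality of Schemes I and II: if `A` is Rayleigh with `E[A²] = P`
(density `a ↦ (2a/P)e^{−a²/P}` on `(0,∞)`), `Θ₁` is uniform on `[−α, α)` with `α = π/N`,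
`Θ₂` is uniform on the finite set `{2nα : n = 0, …, N−1}`, and `A, Θ₁, Θ₂` are mutually
independent, then `X = A·e^{i(Θ₁+Θ₂)}` is circularly symmetric Gaussian `CN(0, P)`, i.e.
has density `z ↦ (1/(πP))·e^{−|z|²/P}` with respect to Lebesgue measure on `ℂ`. -/
theorem stmt7 {Ω : Type*} [MeasurableSpace Ω] (μ : Measure Ω) [IsProbabilityMeasure μ]
    (P : ℝ) (hP : 0 < P) (N : ℕ) (hN : 0 < N) (α : ℝ) (hα : α = π / N)
    (A Θ₁ Θ₂ : Ω → ℝ) (hAm : Measurable A) (h1m : Measurable Θ₁) (h2m : Measurable Θ₂)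
    (hA : μ.map A = (volume.restrict (Set.Ioi (0:ℝ))).withDensity
        (fun a => ENNReal.ofReal ((2 * a / P) * Real.exp (-a ^ 2 / P))))
    (h1 : μ.map Θ₁ = (ENNReal.ofReal (2 * α))⁻¹ • volume.restrict (Set.Ico (-α) α))
    (h2 : μ.map Θ₂ = ∑ n ∈ Finset.range N, ((N : ℝ≥0∞))⁻¹ • Measure.dirac (2 * n * α))
    (hind : iIndepFun ![A, Θ₁, Θ₂] μ) :
    μ.map (fun ω => (A ω : ℂ) * Complex.exp (((Θ₁ ω + Θ₂ ω : ℝ) : ℂ) * Complex.I))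
      = volume.withDensity (fun z => ENNReal.ofReal
          ((1 / (π * P)) * Real.exp (-‖z‖ ^ 2 / P))) := by
  have hNα : 2 * N * α = 2 * π := by
    rw [hα]
    field_simp
  have hΘ : IndepFun Θ₁ Θ₂ μ := hind.indepFun (show (1 : Fin 3) ≠ 2 by decide)
  have hAΘ : IndepFun A (Θ₁ + Θ₂) μ := by
    simpa using hind.indepFun_add_right (fun i => by fin_cases i <;> assumption)
      0 1 2 (by decide) (by decide)
  have hlawΘ : μ.map (Θ₁ + Θ₂)
      = (ENNReal.ofReal (2 * π))⁻¹ • volume.restrict (Ico (-α) (-α + 2 * π)) := by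
    rw [hΘ.map_add_eq_map_conv_map h1m h2m, h1, h2,
      Real.smul_restrict_Ico_conv_sum_smul_dirac (by rw [hα]; positivity), hNα]
  have hX : (fun ω => (A ω : ℂ) * Complex.exp (((Θ₁ ω + Θ₂ ω : ℝ) : ℂ) * Complex.I))
      = Complex.polarCoord.symm ∘ fun ω => (A ω, (Θ₁ + Θ₂) ω) := by
    funext ω
    simp [Complex.exp_mul_I]
  rw [hX, ← map_map Complex.measurable_polarCoord_symm (hAm.prodMk (h1m.add h2m)),
    (indepFun_iff_map_prod_eq_prod_map_map hAm.aemeasurable (h1m.add h2m).aemeasurable).1 hAΘ,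
    hA, hlawΘ]
  exact Complex.map_polarCoord_symm_rayleigh_prod_uniform_Ico hP (-α)
end

section
/- For every α > 0 and β ≥ 0, ∫_0^∞ exp(−α x) · I₀(2√(β x)) dx = (1/α) · exp(β/α). -/
/-!
Expanding `exp (x cos θ)` and integrating termwise over `[-π, π]`, the odd moments of `cos`
vanish and the even ones give `I₀(x) = ∑ x^(2m) / (4^m (m!)²)`, hence
`I₀(2√(βx)) = ∑ (βx)^m / (m!)²`. All terms are nonnegative, so the Laplace transform may be
taken termwise, and `∫₀^∞ x^m e^(-αx) dx = m! / α^(m+1)` turns the series into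
`(1/α) ∑ (β/α)^m / m! = (1/α) e^(β/α)`.
-/

open MeasureTheory Real

open Set Nat

lemma integral_cos_pow_add_two (n : ℕ) :
    ∫ θ in -π..π, cos θ ^ (n + 2) = (n + 1) / (n + 2) * ∫ θ in -π..π, cos θ ^ n := by
  simp [integral_cos_pow]

lemma integral_cos_pow_odd (m : ℕ) : ∫ θ in -π..π, cos θ ^ (2 * m + 1) = 0 := by
  induction m with
  | zero => simp
  | succ k ih => rw [show 2 * (k + 1) + 1 = 2 * k + 1 + 2 by ring, integral_cos_pow_add_two, ih,
      mul_zero]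

lemma integral_cos_pow_even (m : ℕ) :
    ∫ θ in -π..π, cos θ ^ (2 * m) = 2 * π * (2 * m)! / (4 ^ m * (m ! : ℝ) ^ 2) := by
  induction m with
  | zero => simp [two_mul]
  | succ k ih =>
    rw [show 2 * (k + 1) = 2 * k + 2 by ring, integral_cos_pow_add_two, ih,
      factorial_succ (2 * k + 1), factorial_succ (2 * k), factorial_succ k]
    push_cast
    field_simp
    ring

lemma hasSum_pow_div_factorial_exp (x : ℝ) : HasSum (fun n ↦ x ^ n / n !) (exp x) := by
  rw [exp_eq_exp_ℝ]
  exact NormedSpace.expSeries_div_hasSum_exp x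

lemma hasSum_intervalIntegral_exp {f : ℝ → ℝ} (hf : Continuous f) (a b : ℝ) :
    HasSum (fun n ↦ ∫ t in a..b, f t ^ n / n !) (∫ t in a..b, exp (f t)) := by
  obtain ⟨C, hC⟩ := isCompact_uIcc.exists_bound_of_continuousOn (f := f) hf.continuousOn
  refine intervalIntegral.hasSum_integral_of_dominated_convergence (fun n _ ↦ C ^ n / n !)
    (fun n ↦ by fun_prop) (fun n ↦ .of_forall fun t ht ↦ ?_)
    (.of_forall fun _ _ ↦ summable_pow_div_factorial C) intervalIntegrable_const
    (.of_forall fun t _ ↦ ?_)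
  · rw [norm_div, norm_pow, norm_natCast]
    gcongr
    exact hC t (uIoc_subset_uIcc ht)
  · exact hasSum_pow_div_factorial_exp (f t)

lemma hasSum_I0 (x : ℝ) : HasSum (fun m : ℕ ↦ x ^ (2 * m) / (4 ^ m * (m ! : ℝ) ^ 2)) (I0 x) := by
  have h := (hasSum_intervalIntegral_exp (f := fun θ ↦ x * cos θ) (by fun_prop) (-π) π).mul_left
    (1 / (2 * π))
  simp_rw [mul_pow, mul_div_right_comm, intervalIntegral.integral_const_mul] at h
  have h_odd : ∀ n ∉ range (2 * ·), 1 / (2 * π) * (x ^ n / n ! * ∫ θ in -π..π, cos θ ^ n) = 0 := by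
    intro n hn
    obtain ⟨m, rfl⟩ : Odd n := Nat.not_even_iff_odd.1 fun ⟨m, hm⟩ ↦ hn ⟨m, by lia⟩
    rw [integral_cos_pow_odd, mul_zero, mul_zero]
  rw [I0]
  convert ((mul_right_injective₀ two_ne_zero).hasSum_iff h_odd).2 h using 2 with m
  simp only [Function.comp_apply, integral_cos_pow_even]
  field_simp

lemma hasSum_I0_two_mul_sqrt {y : ℝ} (hy : 0 ≤ y) :
    HasSum (fun m : ℕ ↦ y ^ m / (m ! : ℝ) ^ 2) (I0 (2 * √y)) := by
  convert hasSum_I0 (2 * √y) using 2 with m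
  rw [pow_mul, mul_pow, sq_sqrt hy, mul_pow]
  field_simp
  norm_num

lemma integral_pow_mul_exp_neg_mul_Ioi {α : ℝ} (hα : 0 < α) (m : ℕ) :
    ∫ x in Ioi 0, x ^ m * exp (-α * x) = m ! / α ^ (m + 1) := by
  have h := integral_rpow_mul_exp_neg_mul_Ioi (a := m + 1) (by positivity) hα
  rw [add_sub_cancel_right, Gamma_nat_eq_factorial, ← Nat.cast_succ, rpow_natCast] at h
  simp_rw [rpow_natCast, ← neg_mul] at h
  rw [h, one_div_pow, one_div_mul_eq_div]

lemma integral_eq_of_hasSum_integral_of_nonneg {α ι : Type*} [MeasurableSpace α] {μ : Measure α}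
    [Countable ι] {F : ι → α → ℝ} {f : α → ℝ} {s : ℝ} (hF_nonneg : ∀ i, 0 ≤ᵐ[μ] F i)
    (hF_int : ∀ i, Integrable (F i) μ) (hF_sum : HasSum (fun i ↦ ∫ a, F i a ∂μ) s)
    (hf : ∀ᵐ a ∂μ, HasSum (fun i ↦ F i a) (f a)) :
    ∫ a, f a ∂μ = s := by
  have h_norm (i : ι) : ∫ a, ‖F i a‖ ∂μ = ∫ a, F i a ∂μ :=
    integral_congr_ae <| (hF_nonneg i).mono fun a ha ↦ norm_of_nonneg ha
  have h := hasSum_integral_of_summable_integral_norm hF_int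
    (by simpa only [h_norm] using hF_sum.summable)
  rw [hF_sum.unique h]
  exact integral_congr_ae <| hf.mono fun a ha ↦ ha.tsum_eq.symm

/-- Laplace-transform identity (Appendix D of the paper):
`∫_0^∞ exp(−αx) · I₀(2√(βx)) dx = (1/α) · exp(β/α)` for all `α > 0` and `β ≥ 0`. -/
theorem stmt8 (α β : ℝ) (hα : 0 < α) (hβ : 0 ≤ β) :
    ∫ x in Set.Ioi (0:ℝ), Real.exp (-α * x) * I0 (2 * Real.sqrt (β * x))
      = (1 / α) * Real.exp (β / α) := by
  have h_moment (m : ℕ) : ∫ x in Ioi 0, β ^ m / (m ! : ℝ) ^ 2 * (x ^ m * exp (-α * x)) =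
      1 / α * ((β / α) ^ m / m !) := by
    rw [integral_const_mul, integral_pow_mul_exp_neg_mul_Ioi hα, div_pow]
    field_simp
    ring
  refine integral_eq_of_hasSum_integral_of_nonneg
    (F := fun m x ↦ β ^ m / (m ! : ℝ) ^ 2 * (x ^ m * exp (-α * x)))
    (fun m ↦ ae_restrict_of_forall_mem measurableSet_Ioi fun x (hx : 0 < x) ↦ by positivity)
    (fun m ↦ ?_)
    (by simpa only [h_moment] using (hasSum_pow_div_factorial_exp (β / α)).mul_left (1 / α))
    (ae_restrict_of_forall_mem measurableSet_Ioi fun x (hx : 0 < x) ↦ ?_)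
  · refine (Integrable.of_integral_ne_zero ?_).const_mul _
    rw [integral_pow_mul_exp_neg_mul_Ioi hα]
    positivity
  · exact ((hasSum_I0_two_mul_sqrt (mul_nonneg hβ hx.le)).mul_left (exp (-α * x))).congr_fun
      fun m ↦ by ring
end
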